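/- arXiv:2404.08715 — 6 statements merged into one kernel-verified Lean document; each statement's English description precedes it below -/
import Mathlib

section
/- Let d be a positive integer. Let y, y' ∈ ℝ with |y| ≤ 1 and |y'| ≤ 1, and let x, x' : Fin (d+1) → ℝ satisfy x_0 = x'_0 = 1 and |x_j| ≤ 1/√d, |x'_j| ≤ 1/√d for all j ∈ {1,…,d}. Then (1/2)|y² − y'²| + ∑_{j=0}^{d} |y·x_j − y'·x'_j| + (1/2) ∑_{j=0}^{d} |x_j² − x'_j²| + (1/2) ∑_{j=0}^{d} ∑_{h=0, h≠j}^{d} |x_j x_h − x'_j x'_h| ≤ 4 + 4√d + d. -/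
open Finset

lemma key_abs {a a' b b' A B : ℝ} (ha : |a| ≤ A) (ha' : |a'| ≤ A)
    (hb : |b| ≤ B) (hb' : |b'| ≤ B) : |a * b - a' * b'| ≤ 2 * (A * B) := by
  have h0 : 0 ≤ A := le_trans (abs_nonneg a) ha
  have h0' : 0 ≤ B := le_trans (abs_nonneg b) hb
  have h1 : |a * b| ≤ A * B := by
    rw [abs_mul]; exact mul_le_mul ha hb (abs_nonneg _) h0
  have h2 : |a' * b'| ≤ A * B := by
    rw [abs_mul]; exact mul_le_mul ha' hb' (abs_nonneg _) h0
  calc |a * b - a' * b'| ≤ |a * b| + |a' * b'| := abs_sub _ _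
    _ ≤ 2 * (A * B) := by linarith

/-- Proposition 2: L1 sensitivity bound for the weights of the truncated SEV
log-likelihood when two standardized neighboring samples are exchanged. -/
theorem sev_sensitivity_bound (d : ℕ) (hd : 0 < d)
    (y y' : ℝ) (hy : |y| ≤ 1) (hy' : |y'| ≤ 1)
    (x x' : Fin (d + 1) → ℝ)
    (hx0 : x 0 = 1) (hx0' : x' 0 = 1)
    (hx : ∀ j : Fin (d + 1), j ≠ 0 → |x j| ≤ 1 / Real.sqrt d)
    (hx' : ∀ j : Fin (d + 1), j ≠ 0 → |x' j| ≤ 1 / Real.sqrt d) :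
    (1 / 2) * |y ^ 2 - y' ^ 2|
      + ∑ j, |y * x j - y' * x' j|
      + (1 / 2) * ∑ j, |(x j) ^ 2 - (x' j) ^ 2|
      + (1 / 2) * ∑ j, ∑ h ∈ Finset.univ.erase j, |x j * x h - x' j * x' h|
    ≤ 4 + 4 * Real.sqrt d + d := by
  have hdpos : (0:ℝ) < d := by exact_mod_cast hd
  have hrpos : 0 < Real.sqrt d := Real.sqrt_pos.mpr hdpos
  have hsq : Real.sqrt d * Real.sqrt d = d := Real.mul_self_sqrt hdpos.le
  set s : ℝ := 1 / Real.sqrt d with hsdef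
  have hs0 : 0 ≤ s := by positivity
  have hds : (d:ℝ) * s = Real.sqrt d := by
    rw [hsdef, mul_one_div, div_eq_iff hrpos.ne']; exact hsq.symm
  have hs2 : s ^ 2 = 1 / d := by
    rw [hsdef, div_pow, one_pow, sq, hsq]
  set B : Fin (d+1) → ℝ := fun j => if j = 0 then 1 else s with hBdef
  have hBx : ∀ j, |x j| ≤ B j := by
    intro j; by_cases h : j = 0
    · simp [hBdef, h, hx0]
    · simpa [hBdef, h] using hx j h
  have hBx' : ∀ j, |x' j| ≤ B j := by
    intro j; by_cases h : j = 0
    · simp [hBdef, h, hx0']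
    · simpa [hBdef, h] using hx' j h
  set S : ℝ := 1 + Real.sqrt d with hSdef
  have hsum : ∑ j, B j = S := by
    rw [Fin.sum_univ_succ]
    simp only [hBdef, if_pos rfl]
    have : ∀ i : Fin d, (if (Fin.succ i : Fin (d+1)) = 0 then (1:ℝ) else s) = s := by
      intro i; simp [Fin.succ_ne_zero]
    rw [Finset.sum_congr rfl (fun i _ => this i), Finset.sum_const, Finset.card_univ,
      Fintype.card_fin, nsmul_eq_mul, hds, hSdef]
  have hsumsq : ∑ j, (B j) ^ 2 = 2 := by
    rw [Fin.sum_univ_succ]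
    simp only [hBdef, if_pos rfl]
    have : ∀ i : Fin d, (if (Fin.succ i : Fin (d+1)) = 0 then (1:ℝ) else s) ^ 2 = s ^ 2 := by
      intro i; simp [Fin.succ_ne_zero]
    rw [Finset.sum_congr rfl (fun i _ => this i), Finset.sum_const, Finset.card_univ,
      Fintype.card_fin, nsmul_eq_mul, hs2, one_pow]
    rw [mul_one_div, div_self hdpos.ne']; norm_num
  -- term 1
  have h1 : |y ^ 2 - y' ^ 2| ≤ 2 := by
    have a1 : |y ^ 2| ≤ 1 := by rw [abs_pow]; exact pow_le_one₀ (abs_nonneg _) hy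
    have a2 : |y' ^ 2| ≤ 1 := by rw [abs_pow]; exact pow_le_one₀ (abs_nonneg _) hy'
    calc |y ^ 2 - y' ^ 2| ≤ |y ^ 2| + |y' ^ 2| := abs_sub _ _
      _ ≤ 2 := by linarith
  -- term 2
  have h2 : ∑ j, |y * x j - y' * x' j| ≤ 2 * S := by
    calc ∑ j, |y * x j - y' * x' j| ≤ ∑ j, 2 * (1 * B j) :=
          Finset.sum_le_sum fun j _ => key_abs hy hy' (hBx j) (hBx' j)
      _ = 2 * S := by rw [← Finset.mul_sum]; simp [hsum]
  -- term 3
  have h3 : ∑ j, |(x j) ^ 2 - (x' j) ^ 2| ≤ 4 := by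
    calc ∑ j, |(x j) ^ 2 - (x' j) ^ 2| ≤ ∑ j, 2 * (B j * B j) := by
          refine Finset.sum_le_sum fun j _ => ?_
          simpa [sq] using key_abs (hBx j) (hBx' j) (hBx j) (hBx' j)
      _ = 4 := by
          rw [← Finset.mul_sum]
          have : ∑ j, B j * B j = ∑ j, (B j) ^ 2 := by
            exact Finset.sum_congr rfl fun j _ => (sq (B j)).symm
          rw [this, hsumsq]; norm_num
  -- term 4
  have h4 : ∑ j, ∑ h ∈ Finset.univ.erase j, |x j * x h - x' j * x' h|
      ≤ 2 * (S * S) - 4 := by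
    have step : ∀ j : Fin (d+1), ∑ h ∈ Finset.univ.erase j, |x j * x h - x' j * x' h|
        ≤ 2 * B j * (S - B j) := by
      intro j
      calc ∑ h ∈ Finset.univ.erase j, |x j * x h - x' j * x' h|
          ≤ ∑ h ∈ Finset.univ.erase j, 2 * B j * B h :=
            Finset.sum_le_sum fun h _ => by
              simpa [mul_assoc] using key_abs (hBx j) (hBx' j) (hBx h) (hBx' h)
        _ = 2 * B j * (S - B j) := by
            rw [← Finset.mul_sum, Finset.sum_erase_eq_sub (Finset.mem_univ j), hsum]
    calc ∑ j, ∑ h ∈ Finset.univ.erase j, |x j * x h - x' j * x' h|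
        ≤ ∑ j, 2 * B j * (S - B j) := Finset.sum_le_sum fun j _ => step j
      _ = 2 * S * ∑ j, B j - 2 * ∑ j, (B j) ^ 2 := by
          rw [Finset.mul_sum, Finset.mul_sum, ← Finset.sum_sub_distrib]
          exact Finset.sum_congr rfl fun j _ => by ring
      _ = 2 * (S * S) - 4 := by rw [hsum, hsumsq]; ring
  have hSS : S * S = 1 + 2 * Real.sqrt d + (d:ℝ) := by
    rw [hSdef]; nlinarith [hsq]
  linarith [h1, h2, h3, h4, hSS]
end

section
/- Let d and n be positive integers with n ≥ 1, let ε > 0, and set Δ = 4 + 4√d + d. Let (y, x) and (y', x') be two datasets with y, y' : Fin n → ℝ, x, x' : Fin n → Fin (d+1) → ℝ that agree on all samples except the last one, and suppose every sample in both datasets is standardized: |y_i| ≤ 1, x_{i0} = 1, and |x_{ij}| ≤ 1/√d for j ∈ {1,…,d}. Define for each dataset the SEV weights w_1 = −5n/2, w_q = 2n, w_{q²} = −(1/2)(n + ∑_i y_i²), w_{p_j q} = ∑_i y_i x_{ij} (j = 0,…,d), w_{p_j²} = −(1/2) ∑_i x_{ij}² (j = 0,…,d), and w_{p_j p_h} =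 −(1/2) ∑_i x_{ij} x_{ih} (j ≠ h). Then for every choice of real target values t_• , one for each weight index, the product over all weight indices of the Laplace densities (ε/(2Δ)) exp(−ε|t_• − w_•^D|/Δ) is at most exp(ε) times the product over all weight indices of (ε/(2Δ)) exp(−ε|t_• − w_•^{D'}|/Δ). -/
open Finset

/-- The Laplace density with zero mean and scale `Δ/ε`, evaluated at `t`. -/
noncomputable def lapDensity (ε Δ t : ℝ) : ℝ :=
  (ε / (2 * Δ)) * Real.exp (-(ε * |t|) / Δ)

/-!
The density of the released weights is a product of Laplace densities, one per weight, and by the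
triangle inequality each factor changes by at most `exp (ε / Δ * |w(D) - w(D')|)` between the two
datasets. They differ in a single sample, which with `|y| ≤ 1` and `|x_j| ≤ B_j` (`B_0 = 1`,
`B_j = 1 / √d` otherwise) moves the weights by at most `1`, `2 B_j`, `B_j ^ 2` and `B_j B_h`.
These sensitivities add up to `(1 + ∑ B_j) ^ 2 = (2 + √d) ^ 2 = Δ`.
-/

open Real

section LaplaceMechanism

variable {ε Δ : ℝ}

lemma lapDensity_nonneg (hε : 0 ≤ ε) (hΔ : 0 ≤ Δ) (t : ℝ) : 0 ≤ lapDensity ε Δ t := by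
  unfold lapDensity; positivity

lemma lapDensity_sub_le (hε : 0 ≤ ε) (hΔ : 0 ≤ Δ) {t a b c : ℝ} (h : |a - b| ≤ c) :
    lapDensity ε Δ (t - a) ≤ exp (ε / Δ * c) * lapDensity ε Δ (t - b) := by
  have hκ : 0 ≤ ε / Δ := div_nonneg hε hΔ
  have htri : |t - b| ≤ |t - a| + |a - b| := abs_sub_le t a b
  have htotal : -(ε * |t - a|) / Δ ≤ ε / Δ * c + -(ε * |t - b|) / Δ := by
    have := mul_le_mul_of_nonneg_left (show |t - b| - |t - a| ≤ c by linarith) hκ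
    simp only [neg_div, mul_div_right_comm ε]
    linarith
  unfold lapDensity
  rw [mul_left_comm, ← exp_add]
  gcongr

lemma prod_le_exp_sum_mul_prod {ι : Type*} {s : Finset ι} {f g c : ι → ℝ}
    (hf : ∀ i ∈ s, 0 ≤ f i) (h : ∀ i ∈ s, f i ≤ exp (c i) * g i) :
    ∏ i ∈ s, f i ≤ exp (∑ i ∈ s, c i) * ∏ i ∈ s, g i := by
  rw [exp_sum, ← prod_mul_distrib]
  exact prod_le_prod hf h

lemma prod_lapDensity_sub_le (hε : 0 ≤ ε) (hΔ : 0 ≤ Δ) {ι : Type*} {s : Finset ι}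
    {t a b c : ι → ℝ} (h : ∀ i ∈ s, |a i - b i| ≤ c i) :
    ∏ i ∈ s, lapDensity ε Δ (t i - a i)
      ≤ exp (ε / Δ * ∑ i ∈ s, c i) * ∏ i ∈ s, lapDensity ε Δ (t i - b i) := by
  rw [mul_sum]
  exact prod_le_exp_sum_mul_prod (fun i _ => lapDensity_nonneg hε hΔ _)
    (fun i hi => lapDensity_sub_le hε hΔ (h i hi))

end LaplaceMechanism

lemma abs_sum_sub_sum_le_of_eq_of_ne {ι : Type*} [Fintype ι] {f g : ι → ℝ} {c : ℝ} (k : ι)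
    (h : ∀ i, i ≠ k → f i = g i) (hk : |f k - g k| ≤ c) : |∑ i, f i - ∑ i, g i| ≤ c := by
  rwa [← sum_sub_distrib, sum_eq_single k (fun i _ hi => by rw [h i hi, sub_self]) (by simp)]

lemma abs_mul_sub_mul_le {a b a' b' A B : ℝ} (ha : |a| ≤ A) (hb : |b| ≤ B)
    (ha' : |a'| ≤ A) (hb' : |b'| ≤ B) : |a * b - a' * b'| ≤ 2 * (A * B) := by
  have hA : 0 ≤ A := (abs_nonneg a).trans ha
  calc |a * b - a' * b'| ≤ |a| * |b| + |a'| * |b'| := by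
        rw [← abs_mul, ← abs_mul]; exact abs_sub _ _
    _ ≤ A * B + A * B := by gcongr
    _ = 2 * (A * B) := by ring

lemma abs_neg_half_mul_sub_le {a b c : ℝ} (h : |a - b| ≤ 2 * c) :
    |-(1 / 2) * a - -(1 / 2) * b| ≤ c := by
  rw [← mul_sub, abs_mul]; norm_num; linarith

lemma sq_sum_eq_sum_mul_self_add_sum_sum_erase {ι R : Type*} [CommSemiring R] [DecidableEq ι]
    (s : Finset ι) (B : ι → R) :
    (∑ j ∈ s, B j) ^ 2 = ∑ j ∈ s, B j * B j + ∑ j ∈ s, ∑ h ∈ s.erase j, B j * B h := by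
  rw [sq, sum_mul_sum, ← sum_add_distrib]
  exact sum_congr rfl fun j hj => (add_sum_erase s _ hj).symm

/-- The density at `t` of the noisy weights released by Algorithm 1 on the dataset `(y, x)`. -/
noncomputable def sevLapDensity {n d : ℕ} (ε Δ : ℝ) (y : Fin n → ℝ) (x : Fin n → Fin (d + 1) → ℝ)
    (t1 tq tq2 : ℝ) (tpq tp2 : Fin (d + 1) → ℝ) (tpp : Fin (d + 1) → Fin (d + 1) → ℝ) : ℝ :=
  lapDensity ε Δ (t1 - (-(5 * (n : ℝ)) / 2))
    * lapDensity ε Δ (tq - 2 * (n : ℝ))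
    * lapDensity ε Δ (tq2 - (-(1 / 2) * ((n : ℝ) + ∑ i, (y i) ^ 2)))
    * (∏ j, lapDensity ε Δ (tpq j - ∑ i, y i * x i j))
    * (∏ j, lapDensity ε Δ (tp2 j - (-(1 / 2) * ∑ i, (x i j) ^ 2)))
    * (∏ j, ∏ h ∈ Finset.univ.erase j,
        lapDensity ε Δ (tpp j h - (-(1 / 2) * ∑ i, x i j * x i h)))

theorem sevLapDensity_le_exp_mul_sevLapDensity {n d : ℕ} {ε Δ : ℝ} (hε : 0 ≤ ε) (hΔ : 0 ≤ Δ)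
    {y y' : Fin n → ℝ} {x x' : Fin n → Fin (d + 1) → ℝ} (B : Fin (d + 1) → ℝ) (k : Fin n)
    (hagree : ∀ i, i ≠ k → y i = y' i ∧ x i = x' i)
    (hy : |y k| ≤ 1) (hy' : |y' k| ≤ 1) (hx : ∀ j, |x k j| ≤ B j) (hx' : ∀ j, |x' k j| ≤ B j)
    (t1 tq tq2 : ℝ) (tpq tp2 : Fin (d + 1) → ℝ) (tpp : Fin (d + 1) → Fin (d + 1) → ℝ) :
    sevLapDensity ε Δ y x t1 tq tq2 tpq tp2 tpp
      ≤ exp (ε / Δ * (1 + ∑ j, B j) ^ 2) * sevLapDensity ε Δ y' x' t1 tq tq2 tpq tp2 tpp := by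
  have hq2 : lapDensity ε Δ (tq2 - (-(1 / 2) * ((n : ℝ) + ∑ i, (y i) ^ 2)))
      ≤ exp (ε / Δ * 1)
        * lapDensity ε Δ (tq2 - (-(1 / 2) * ((n : ℝ) + ∑ i, (y' i) ^ 2))) := by
    refine lapDensity_sub_le hε hΔ (abs_neg_half_mul_sub_le ?_)
    rw [add_sub_add_left_eq_sub]
    refine abs_sum_sub_sum_le_of_eq_of_ne k (fun i hi => by rw [(hagree i hi).1]) ?_
    simpa only [sq, mul_one] using abs_mul_sub_mul_le hy hy hy' hy'
  have hpq := prod_lapDensity_sub_le hε hΔ (s := univ) (t := tpq)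
    (a := fun j => ∑ i, y i * x i j) (b := fun j => ∑ i, y' i * x' i j)
    (fun j _ => abs_sum_sub_sum_le_of_eq_of_ne k
      (fun i hi => by rw [(hagree i hi).1, (hagree i hi).2])
      (abs_mul_sub_mul_le hy (hx j) hy' (hx' j)))
  have hp2 := prod_lapDensity_sub_le hε hΔ (s := univ) (t := tp2)
    (a := fun j => -(1 / 2) * ∑ i, (x i j) ^ 2) (b := fun j => -(1 / 2) * ∑ i, (x' i j) ^ 2)
    (fun j _ => abs_neg_half_mul_sub_le <| abs_sum_sub_sum_le_of_eq_of_ne k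
      (fun i hi => by rw [(hagree i hi).2])
      (by simpa only [sq] using abs_mul_sub_mul_le (hx j) (hx j) (hx' j) (hx' j)))
  have hpp := prod_le_exp_sum_mul_prod (s := univ)
    (fun j _ => prod_nonneg fun h _ => lapDensity_nonneg hε hΔ _)
    (fun j _ => prod_lapDensity_sub_le hε hΔ (s := univ.erase j) (t := tpp j)
      (a := fun h => -(1 / 2) * ∑ i, x i j * x i h)
      (b := fun h => -(1 / 2) * ∑ i, x' i j * x' i h)
      (fun h _ => abs_neg_half_mul_sub_le <| abs_sum_sub_sum_le_of_eq_of_ne k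
        (fun i hi => by rw [(hagree i hi).2])
        (abs_mul_sub_mul_le (hx j) (hx h) (hx' j) (hx' h))))
  rw [← mul_sum] at hpp
  simp only [one_mul] at hpq
  have htotal : ε / Δ * 1 + ε / Δ * ∑ j, 2 * B j + ε / Δ * ∑ j, B j * B j
      + ε / Δ * ∑ j, ∑ h ∈ univ.erase j, B j * B h = ε / Δ * (1 + ∑ j, B j) ^ 2 := by
    rw [← mul_sum, add_sq, sq_sum_eq_sum_mul_self_add_sum_sum_erase]
    ring
  unfold sevLapDensity
  -- unfolded so that `positivity` discharges the nonnegativity side goals of `grw`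
  unfold lapDensity at *
  grw [hq2, hpq, hp2, hpp]
  rw [← htotal]
  simp only [exp_add]
  exact le_of_eq (by ring)

noncomputable def standardizedBound (d : ℕ) (j : Fin (d + 1)) : ℝ :=
  if j = 0 then 1 else 1 / √d

lemma abs_le_standardizedBound {d : ℕ} {v : Fin (d + 1) → ℝ} (h0 : v 0 = 1)
    (h : ∀ j : Fin (d + 1), j ≠ 0 → |v j| ≤ 1 / √d) (j : Fin (d + 1)) :
    |v j| ≤ standardizedBound d j := by
  unfold standardizedBound
  split_ifs with hj
  · simp [hj, h0]
  · exact h j hj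

lemma sum_standardizedBound (d : ℕ) : ∑ j, standardizedBound d j = 1 + √d := by
  simp [standardizedBound, Fin.sum_univ_succ, Fin.succ_ne_zero, ← div_eq_mul_inv, div_sqrt]

theorem sev_dp_density_ratio_general (n d : ℕ) (hn : 1 ≤ n)
    (ε : ℝ) (hε : 0 < ε) (Δ : ℝ) (hΔ : Δ = 4 + 4 * Real.sqrt d + d)
    (y y' : Fin n → ℝ) (x x' : Fin n → Fin (d + 1) → ℝ)
    (hagree : ∀ i : Fin n, (i : ℕ) + 1 < n → y i = y' i ∧ ∀ j, x i j = x' i j)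
    (hy : ∀ i, |y i| ≤ 1) (hy' : ∀ i, |y' i| ≤ 1)
    (hx0 : ∀ i, x i 0 = 1) (hx0' : ∀ i, x' i 0 = 1)
    (hx : ∀ i, ∀ j : Fin (d + 1), j ≠ 0 → |x i j| ≤ 1 / Real.sqrt d)
    (hx' : ∀ i, ∀ j : Fin (d + 1), j ≠ 0 → |x' i j| ≤ 1 / Real.sqrt d)
    (t1 tq tq2 : ℝ) (tpq tp2 : Fin (d + 1) → ℝ)
    (tpp : Fin (d + 1) → Fin (d + 1) → ℝ) :
    lapDensity ε Δ (t1 - (-(5 * (n : ℝ)) / 2))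
      * lapDensity ε Δ (tq - 2 * (n : ℝ))
      * lapDensity ε Δ (tq2 - (-(1 / 2) * ((n : ℝ) + ∑ i, (y i) ^ 2)))
      * (∏ j, lapDensity ε Δ (tpq j - ∑ i, y i * x i j))
      * (∏ j, lapDensity ε Δ (tp2 j - (-(1 / 2) * ∑ i, (x i j) ^ 2)))
      * (∏ j, ∏ h ∈ Finset.univ.erase j,
          lapDensity ε Δ (tpp j h - (-(1 / 2) * ∑ i, x i j * x i h)))
    ≤ Real.exp ε *
      (lapDensity ε Δ (t1 - (-(5 * (n : ℝ)) / 2))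
        * lapDensity ε Δ (tq - 2 * (n : ℝ))
        * lapDensity ε Δ (tq2 - (-(1 / 2) * ((n : ℝ) + ∑ i, (y' i) ^ 2)))
        * (∏ j, lapDensity ε Δ (tpq j - ∑ i, y' i * x' i j))
        * (∏ j, lapDensity ε Δ (tp2 j - (-(1 / 2) * ∑ i, (x' i j) ^ 2)))
        * (∏ j, ∏ h ∈ Finset.univ.erase j,
            lapDensity ε Δ (tpp j h - (-(1 / 2) * ∑ i, x' i j * x' i h)))) := by
  have hΔpos : 0 < Δ := by rw [hΔ]; positivity
  have hΔsq : (1 + ∑ j, standardizedBound d j) ^ 2 = Δ := by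
    rw [sum_standardizedBound, hΔ]
    linear_combination sq_sqrt (Nat.cast_nonneg (α := ℝ) d)
  let last : Fin n := ⟨n - 1, by omega⟩
  have hagree_last (i : Fin n) (hi : i ≠ last) : y i = y' i ∧ x i = x' i := by
    have hi' : (i : ℕ) + 1 < n := by
      have : (i : ℕ) ≠ n - 1 := fun h => hi (Fin.ext h)
      omega
    exact ⟨(hagree i hi').1, funext (hagree i hi').2⟩
  have := sevLapDensity_le_exp_mul_sevLapDensity hε.le hΔpos.le (standardizedBound d) last
    hagree_last (hy last) (hy' last) (abs_le_standardizedBound (hx0 last) (hx last))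
    (abs_le_standardizedBound (hx0' last) (hx' last)) t1 tq tq2 tpq tp2 tpp
  rwa [hΔsq, div_mul_cancel₀ ε hΔpos.ne'] at this

/-- Proposition 3: the density-ratio inequality establishing that the
differentially private SEV regression (Algorithm 1) satisfies
ε-differential privacy. -/
theorem sev_dp_density_ratio (n d : ℕ) (hn : 1 ≤ n) (hd : 0 < d)
    (ε : ℝ) (hε : 0 < ε) (Δ : ℝ) (hΔ : Δ = 4 + 4 * Real.sqrt d + d)
    (y y' : Fin n → ℝ) (x x' : Fin n → Fin (d + 1) → ℝ)
    (hagree : ∀ i : Fin n, (i : ℕ) + 1 < n → y i = y' i ∧ ∀ j, x i j = x' i j)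
    (hy : ∀ i, |y i| ≤ 1) (hy' : ∀ i, |y' i| ≤ 1)
    (hx0 : ∀ i, x i 0 = 1) (hx0' : ∀ i, x' i 0 = 1)
    (hx : ∀ i, ∀ j : Fin (d + 1), j ≠ 0 → |x i j| ≤ 1 / Real.sqrt d)
    (hx' : ∀ i, ∀ j : Fin (d + 1), j ≠ 0 → |x' i j| ≤ 1 / Real.sqrt d)
    (t1 tq tq2 : ℝ) (tpq tp2 : Fin (d + 1) → ℝ)
    (tpp : Fin (d + 1) → Fin (d + 1) → ℝ) :
    lapDensity ε Δ (t1 - (-(5 * (n : ℝ)) / 2))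
      * lapDensity ε Δ (tq - 2 * (n : ℝ))
      * lapDensity ε Δ (tq2 - (-(1 / 2) * ((n : ℝ) + ∑ i, (y i) ^ 2)))
      * (∏ j, lapDensity ε Δ (tpq j - ∑ i, y i * x i j))
      * (∏ j, lapDensity ε Δ (tp2 j - (-(1 / 2) * ∑ i, (x i j) ^ 2)))
      * (∏ j, ∏ h ∈ Finset.univ.erase j,
          lapDensity ε Δ (tpp j h - (-(1 / 2) * ∑ i, x i j * x i h)))
    ≤ Real.exp ε *
      (lapDensity ε Δ (t1 - (-(5 * (n : ℝ)) / 2))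
        * lapDensity ε Δ (tq - 2 * (n : ℝ))
        * lapDensity ε Δ (tq2 - (-(1 / 2) * ((n : ℝ) + ∑ i, (y' i) ^ 2)))
        * (∏ j, lapDensity ε Δ (tpq j - ∑ i, y' i * x' i j))
        * (∏ j, lapDensity ε Δ (tp2 j - (-(1 / 2) * ∑ i, (x' i j) ^ 2)))
        * (∏ j, ∏ h ∈ Finset.univ.erase j,
            lapDensity ε Δ (tpp j h - (-(1 / 2) * ∑ i, x' i j * x' i h)))) :=
  sev_dp_density_ratio_general n d hn ε hε Δ hΔ y y' x x' hagree hy hy' hx0 hx0' hx hx' t1 tq tq2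
    tpq tp2 tpp
end

section
/- Let n, d be positive integers, y : Fin n → ℝ, x : Fin n → Fin (d+1) → ℝ, p : Fin (d+1) → ℝ, and q ∈ ℝ. Then the second-order truncation of the logistic log-likelihood, namely n·((q−1) − (1/2)(q−1)²) + ∑_{i} (y_i q − ∑_{j=0}^{d} p_j x_{ij}) − 2 ∑_{i} (log 2 + (1/2)(y_i q − ∑_{j=0}^{d} p_j x_{ij}) + (1/8)(y_i q − ∑_{j=0}^{d} p_j x_{ij})²), is identically equal to −n(3/2 + 2 log 2) + 2nq − (n/2 + (1/4) ∑_i y_i²) q² + (1/2) ∑_i ∑_{j=0}^{d} y_i x_{ij} p_j q − (1/4) ∑_i ∑_{j=0}^{d} x_{ij}² p_j² − (1/4) ∑_i ∑_{j=0}^{d} ∑_{h=0, h≠j}^{d} x_{ij} x_{ih} p_j p_h. -/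
/-!
Both Taylor polynomials are quadratic, so the truncated log-likelihood is a quadratic polynomial
in `(p, q)`. Writing `rᵢ = yᵢ q - ∑ⱼ pⱼ xᵢⱼ`, the linear terms cancel in
`rᵢ - 2 (log 2 + rᵢ / 2 + rᵢ² / 8) = -2 log 2 - rᵢ² / 4`, and the claimed form is obtained by
expanding `rᵢ²`, splitting the square of the sum `∑ⱼ pⱼ xᵢⱼ` into its diagonal and off-diagonal
parts.
-/

open Finset

theorem sq_sum_eq_sum_sq_add_sum_sum_erase {ι R : Type*} [Fintype ι] [DecidableEq ι]
    [CommSemiring R] (f : ι → R) :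
    (∑ j, f j) ^ 2 = ∑ j, f j ^ 2 + ∑ j, ∑ h ∈ univ.erase j, f j * f h := by
  rw [sq, sum_mul_sum, ← sum_add_distrib]
  refine sum_congr rfl fun j _ => ?_
  rw [← add_sum_erase _ (fun h => f j * f h) (mem_univ j), sq]

theorem sq_mul_sub_sum_mul {ι R : Type*} [Fintype ι] [DecidableEq ι] [CommRing R]
    (a q : R) (p x : ι → R) :
    (a * q - ∑ j, p j * x j) ^ 2
      = a ^ 2 * q ^ 2 - 2 * ∑ j, a * x j * p j * q + ∑ j, x j ^ 2 * p j ^ 2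
        + ∑ j, ∑ h ∈ univ.erase j, x j * x h * p j * p h := by
  have hcross : ∑ j, a * x j * p j * q = a * q * ∑ j, p j * x j := by
    rw [mul_sum]
    exact sum_congr rfl fun j _ => by ring
  rw [sub_sq, hcross, sq_sum_eq_sum_sq_add_sum_sum_erase]
  have hdiag : ∑ j, (p j * x j) ^ 2 = ∑ j, x j ^ 2 * p j ^ 2 :=
    sum_congr rfl fun j _ => by ring
  have hoff : ∑ j, ∑ h ∈ univ.erase j, p j * x j * (p h * x h)
      = ∑ j, ∑ h ∈ univ.erase j, x j * x h * p j * p h :=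
    sum_congr rfl fun j _ => sum_congr rfl fun h _ => by ring
  rw [hdiag, hoff]
  ring

theorem logistic_taylor_truncation_general (n d : ℕ)
    (y : Fin n → ℝ) (x : Fin n → Fin (d + 1) → ℝ)
    (p : Fin (d + 1) → ℝ) (q : ℝ) :
    (n : ℝ) * ((q - 1) - (1 / 2) * (q - 1) ^ 2)
      + ∑ i, (y i * q - ∑ j, p j * x i j)
      - 2 * ∑ i, (Real.log 2 + (1 / 2) * (y i * q - ∑ j, p j * x i j)
          + (1 / 8) * (y i * q - ∑ j, p j * x i j) ^ 2)
    = -(n : ℝ) * (3 / 2 + 2 * Real.log 2) + 2 * (n : ℝ) * q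
      - ((n : ℝ) / 2 + (1 / 4) * ∑ i, (y i) ^ 2) * q ^ 2
      + (1 / 2) * ∑ i, ∑ j, y i * x i j * p j * q
      - (1 / 4) * ∑ i, ∑ j, (x i j) ^ 2 * (p j) ^ 2
      - (1 / 4) * ∑ i, ∑ j, ∑ h ∈ Finset.univ.erase j, x i j * x i h * p j * p h := by
  simp only [sq_mul_sub_sum_mul, mul_add, mul_sub, sum_add_distrib, sum_sub_distrib, ← mul_sum,
    ← sum_mul, sum_const, card_univ, Fintype.card_fin, nsmul_eq_mul]
  ring

/-- Proposition 4: second-order Taylor truncation of the logistic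
log-likelihood. -/
theorem logistic_taylor_truncation (n d : ℕ) (hn : 0 < n) (hd : 0 < d)
    (y : Fin n → ℝ) (x : Fin n → Fin (d + 1) → ℝ)
    (p : Fin (d + 1) → ℝ) (q : ℝ) :
    (n : ℝ) * ((q - 1) - (1 / 2) * (q - 1) ^ 2)
      + ∑ i, (y i * q - ∑ j, p j * x i j)
      - 2 * ∑ i, (Real.log 2 + (1 / 2) * (y i * q - ∑ j, p j * x i j)
          + (1 / 8) * (y i * q - ∑ j, p j * x i j) ^ 2)
    = -(n : ℝ) * (3 / 2 + 2 * Real.log 2) + 2 * (n : ℝ) * q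
      - ((n : ℝ) / 2 + (1 / 4) * ∑ i, (y i) ^ 2) * q ^ 2
      + (1 / 2) * ∑ i, ∑ j, y i * x i j * p j * q
      - (1 / 4) * ∑ i, ∑ j, (x i j) ^ 2 * (p j) ^ 2
      - (1 / 4) * ∑ i, ∑ j, ∑ h ∈ Finset.univ.erase j, x i j * x i h * p j * p h :=
  logistic_taylor_truncation_general n d y x p q
end

section
/- Let I be a finite index set, ε > 0, Δ > 0, and a, b, t : I → ℝ with ∑_{i ∈ I} |a_i − b_i| ≤ Δ. Then ∏_{i ∈ I} exp(−(ε/Δ)|t_i − a_i|) ≤ exp(ε) · ∏_{i ∈ I} exp(−(ε/Δ)|t_i − b_i|). -/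
open Finset

/-!
Taking logarithms, the claim is that `(ε / Δ) * ∑ i, (|t i - b i| - |t i - a i|) ≤ ε`.
By the triangle inequality each summand is at most `|a i - b i|`, so the sum is at most `Δ`.
-/

section

variable {ι X : Type*} [PseudoMetricSpace X]

theorem sum_dist_sub_dist_le_sum_dist (s : Finset ι) (a b t : ι → X) :
    ∑ i ∈ s, (dist (t i) (b i) - dist (t i) (a i)) ≤ ∑ i ∈ s, dist (a i) (b i) :=
  sum_le_sum fun i _ => by linarith [dist_triangle (t i) (a i) (b i)]

theorem sum_neg_div_mul_dist_le (s : Finset ι) {ε Δ : ℝ} (hε : 0 ≤ ε) (a b t : ι → X)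
    (hab : ∑ i ∈ s, dist (a i) (b i) ≤ Δ) :
    ∑ i ∈ s, -(ε / Δ) * dist (t i) (a i) ≤ ε + ∑ i ∈ s, -(ε / Δ) * dist (t i) (b i) := by
  have hΔ : 0 ≤ Δ := (sum_nonneg fun i _ => dist_nonneg).trans hab
  have hratio : (∑ i ∈ s, (dist (t i) (b i) - dist (t i) (a i))) / Δ ≤ 1 :=
    div_le_one_of_le₀ ((sum_dist_sub_dist_le_sum_dist s a b t).trans hab) hΔ
  calc ∑ i ∈ s, -(ε / Δ) * dist (t i) (a i)
      = ε * ((∑ i ∈ s, (dist (t i) (b i) - dist (t i) (a i))) / Δ)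
          + ∑ i ∈ s, -(ε / Δ) * dist (t i) (b i) := by
        simp only [← mul_sum, sum_sub_distrib]; ring
    _ ≤ ε * 1 + ∑ i ∈ s, -(ε / Δ) * dist (t i) (b i) := by gcongr
    _ = ε + ∑ i ∈ s, -(ε / Δ) * dist (t i) (b i) := by rw [mul_one]

end

theorem laplace_product_ratio_general {I : Type*} [Fintype I]
    (ε Δ : ℝ) (hε : 0 < ε)
    (a b t : I → ℝ) (hab : ∑ i, |a i - b i| ≤ Δ) :
    ∏ i, Real.exp (-(ε / Δ) * |t i - a i|)
      ≤ Real.exp ε * ∏ i, Real.exp (-(ε / Δ) * |t i - b i|) := by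
  rw [← Real.exp_sum, ← Real.exp_sum, ← Real.exp_add, Real.exp_le_exp]
  simpa only [Real.dist_eq] using
    sum_neg_div_mul_dist_le univ hε.le a b t (by simpa only [Real.dist_eq] using hab)

/-- Key step of Propositions 3 and 6: if the total L1 distance between two
weight vectors is at most `Δ`, the ratio of the products of Laplace(`Δ/ε`)
densities centered at the respective weights is at most `exp ε`. -/
theorem laplace_product_ratio {I : Type*} [Fintype I]
    (ε Δ : ℝ) (hε : 0 < ε) (hΔ : 0 < Δ)
    (a b t : I → ℝ) (hab : ∑ i, |a i - b i| ≤ Δ) :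
    ∏ i, Real.exp (-(ε / Δ) * |t i - a i|)
      ≤ Real.exp ε * ∏ i, Real.exp (-(ε / Δ) * |t i - b i|) :=
  laplace_product_ratio_general ε Δ hε a b t hab
end

section
/- Let n, d be positive integers, y : Fin n → ℝ, and x : Fin n → Fin (d+1) → ℝ. The function f(p, q) = n log q + ∑_{i=1}^n (y_i q − ∑_{j=0}^d p_j x_{ij}) − ∑_{i=1}^n exp(y_i q − ∑_{j=0}^d p_j x_{ij}) is concave on the convex set {(p, q) ∈ ℝ^{d+1} × ℝ : q > 0}. -/
/-!
After the substitution `q = 1/σ`, `p = β/σ`, every standardized residual `y_i q - ⟨p, x_i⟩` is a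
linear function of `(p, q)`. The log-likelihood is then `n log q` (concave, being `log` of a linear
coordinate) plus a linear function, minus a sum of exponentials of linear functions (convex).
-/

open Finset

theorem ConvexOn.finset_sum {𝕜 E β ι : Type*} [Semiring 𝕜] [PartialOrder 𝕜]
    [AddCommMonoid E] [SMul 𝕜 E] [AddCommMonoid β] [PartialOrder β] [IsOrderedAddMonoid β]
    [Module 𝕜 β] {s : Set E} (hs : Convex 𝕜 s) (t : Finset ι) {f : ι → E → β}
    (hf : ∀ i ∈ t, ConvexOn 𝕜 s (f i)) :
    ConvexOn 𝕜 s (fun v => ∑ i ∈ t, f i v) := by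
  classical
  induction t using Finset.induction with
  | empty => simpa using convexOn_const 0 hs
  | insert a t ha ih =>
    simp only [sum_insert ha]
    exact (hf a (mem_insert_self a t)).add (ih fun i hi => hf i (mem_insert_of_mem hi))

section LinearFunctionals

variable {E : Type*} [AddCommGroup E] [Module ℝ E]

theorem concaveOn_mul_log_linearMap {c : ℝ} (hc : 0 ≤ c) (φ : E →ₗ[ℝ] ℝ) :
    ConcaveOn ℝ {v | 0 < φ v} (fun v => c * Real.log (φ v)) :=
  (strictConcaveOn_log_Ioi.concaveOn.comp_linearMap φ).smul hc

theorem convexOn_sum_exp_linearMap {ι : Type*} [Fintype ι] (L : ι → E →ₗ[ℝ] ℝ) :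
    ConvexOn ℝ Set.univ (fun v => ∑ i, Real.exp (L i v)) :=
  ConvexOn.finset_sum convex_univ univ fun i _ => convexOn_exp.comp_linearMap (L i)

theorem concaveOn_mul_log_add_sum_sub_sum_exp {ι : Type*} [Fintype ι] {c : ℝ} (hc : 0 ≤ c)
    (φ : E →ₗ[ℝ] ℝ) (L : ι → E →ₗ[ℝ] ℝ) :
    ConcaveOn ℝ {v | 0 < φ v}
      (fun v => c * Real.log (φ v) + ∑ i, L i v - ∑ i, Real.exp (L i v)) := by
  have hs : Convex ℝ {v | 0 < φ v} := (convex_Ioi 0).linear_preimage φ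
  have hlinear : ConcaveOn ℝ {v | 0 < φ v} (fun v => ∑ i, L i v) := by
    simpa only [LinearMap.coe_sum, sum_fn] using (∑ i, L i).concaveOn hs
  exact ((concaveOn_mul_log_linearMap hc φ).add hlinear).sub
    ((convexOn_sum_exp_linearMap L).subset (Set.subset_univ _) hs)

end LinearFunctionals

/-- The standardized residual `(y_i - ⟨β, x_i⟩) / σ`, written in the coordinates
`p = β / σ`, `q = 1 / σ`. -/
def sevResidual {n d : ℕ} (y : Fin n → ℝ) (x : Fin n → Fin (d + 1) → ℝ) (i : Fin n) :
    ((Fin (d + 1) → ℝ) × ℝ) →ₗ[ℝ] ℝ where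
  toFun pq := y i * pq.2 - ∑ j, pq.1 j * x i j
  map_add' a b := by
    simp only [Prod.fst_add, Prod.snd_add, Pi.add_apply, add_mul, mul_add, sum_add_distrib]
    ring
  map_smul' c a := by
    simp only [Prod.smul_fst, Prod.smul_snd, Pi.smul_apply, smul_eq_mul, RingHom.id_apply,
      mul_sub, mul_sum]
    ring_nf

theorem sev_loglik_concave_general (n d : ℕ)
    (y : Fin n → ℝ) (x : Fin n → Fin (d + 1) → ℝ) :
    ConcaveOn ℝ {pq : (Fin (d + 1) → ℝ) × ℝ | 0 < pq.2}
      (fun pq => (n : ℝ) * Real.log pq.2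
        + ∑ i, (y i * pq.2 - ∑ j, pq.1 j * x i j)
        - ∑ i, Real.exp (y i * pq.2 - ∑ j, pq.1 j * x i j)) :=
  concaveOn_mul_log_add_sum_sub_sum_exp (Nat.cast_nonneg n)
    (LinearMap.snd ℝ (Fin (d + 1) → ℝ) ℝ) (sevResidual y x)

/-- The reparametrized SEV log-likelihood is concave on the region `q > 0`. -/
theorem sev_loglik_concave (n d : ℕ) (hn : 0 < n) (hd : 0 < d)
    (y : Fin n → ℝ) (x : Fin n → Fin (d + 1) → ℝ) :
    ConcaveOn ℝ {pq : (Fin (d + 1) → ℝ) × ℝ | 0 < pq.2}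
      (fun pq => (n : ℝ) * Real.log pq.2
        + ∑ i, (y i * pq.2 - ∑ j, pq.1 j * x i j)
        - ∑ i, Real.exp (y i * pq.2 - ∑ j, pq.1 j * x i j)) :=
  sev_loglik_concave_general n d y x
end

section
/- Let n, d be positive integers, y : Fin n → ℝ, and x : Fin n → Fin (d+1) → ℝ. The function g(p, q) = n log q + ∑_{i=1}^n (y_i q − ∑_{j=0}^d p_j x_{ij}) − 2 ∑_{i=1}^n log(1 + exp(y_i q − ∑_{j=0}^d p_j x_{ij})) is concave on the convex set {(p, q) ∈ ℝ^{d+1} × ℝ : q > 0}. -/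
/-!
`q ↦ n log q` is concave on `q > 0` and the middle sum is linear in `(p, q)`. The function
`t ↦ log (1 + eᵗ)` is convex since its derivative is the increasing sigmoid, so each term
`log (1 + exp (y_i q - ∑ⱼ pⱼ x_ij))`, a convex function of a linear form in `(p, q)`, is convex too.
-/

open Finset Real

section FinsetSum

variable {𝕜 E β ι : Type*} [Semiring 𝕜] [PartialOrder 𝕜] [AddCommMonoid E] [AddCommMonoid β]
  [PartialOrder β] [IsOrderedAddMonoid β] [SMul 𝕜 E] [Module 𝕜 β] {s : Set E} {t : Finset ι}
  {f : ι → E → β}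

theorem ConvexOn.sum (hs : Convex 𝕜 s) (hf : ∀ i ∈ t, ConvexOn 𝕜 s (f i)) :
    ConvexOn 𝕜 s fun z => ∑ i ∈ t, f i z :=
  Finset.sum_fn t f ▸ Finset.sum_induction f (ConvexOn 𝕜 s) (fun _ _ => ConvexOn.add)
    (convexOn_const 0 hs) hf

theorem ConcaveOn.sum (hs : Convex 𝕜 s) (hf : ∀ i ∈ t, ConcaveOn 𝕜 s (f i)) :
    ConcaveOn 𝕜 s fun z => ∑ i ∈ t, f i z :=
  Finset.sum_fn t f ▸ Finset.sum_induction f (ConcaveOn 𝕜 s) (fun _ _ => ConcaveOn.add)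
    (concaveOn_const 0 hs) hf

end FinsetSum

namespace Real

lemma hasDerivAt_log_one_add_exp (t : ℝ) :
    HasDerivAt (fun t => log (1 + exp t)) (sigmoid t) t := by
  convert ((hasDerivAt_exp t).const_add 1).log (by positivity) using 1
  rw [sigmoid_def, exp_neg]
  field_simp
  ring

lemma convexOn_log_one_add_exp : ConvexOn ℝ Set.univ fun t => log (1 + exp t) := by
  refine Monotone.convexOn_univ_of_deriv
    (fun t => (hasDerivAt_log_one_add_exp t).differentiableAt) ?_
  rw [funext fun t => (hasDerivAt_log_one_add_exp t).deriv]
  exact sigmoid_monotone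

end Real

def linearPredictor {ι : Type*} [Fintype ι] (y : ℝ) (x : ι → ℝ) : (ι → ℝ) × ℝ →ₗ[ℝ] ℝ where
  toFun pq := y * pq.2 - ∑ j, pq.1 j * x j
  map_add' a b := by
    simp only [Prod.fst_add, Prod.snd_add, Pi.add_apply, add_mul, sum_add_distrib]
    ring
  map_smul' c a := by
    simp only [Prod.smul_fst, Prod.smul_snd, Pi.smul_apply, smul_eq_mul, mul_assoc, ← mul_sum,
      RingHom.id_apply]
    ring

theorem logistic_loglik_concave_general (n d : ℕ)
    (y : Fin n → ℝ) (x : Fin n → Fin (d + 1) → ℝ) :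
    ConcaveOn ℝ {pq : (Fin (d + 1) → ℝ) × ℝ | 0 < pq.2}
      (fun pq => (n : ℝ) * Real.log pq.2
        + ∑ i, (y i * pq.2 - ∑ j, pq.1 j * x i j)
        - 2 * ∑ i, Real.log (1 + Real.exp (y i * pq.2 - ∑ j, pq.1 j * x i j))) := by
  set S : Set ((Fin (d + 1) → ℝ) × ℝ) := {pq | 0 < pq.2}
  have hS : Convex ℝ S := (convex_Ioi 0).linear_preimage (LinearMap.snd ℝ _ ℝ)
  have hlog : ConcaveOn ℝ S fun pq => (n : ℝ) * log pq.2 :=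
    (strictConcaveOn_log_Ioi.concaveOn.comp_linearMap (LinearMap.snd ℝ _ ℝ)).smul n.cast_nonneg
  have hlin : ConcaveOn ℝ S fun pq => ∑ i, (y i * pq.2 - ∑ j, pq.1 j * x i j) :=
    ConcaveOn.sum hS fun i _ => (linearPredictor (y i) (x i)).concaveOn hS
  have hsoftplus : ConvexOn ℝ S
      fun pq => 2 * ∑ i, log (1 + exp (y i * pq.2 - ∑ j, pq.1 j * x i j)) :=
    (ConvexOn.sum hS fun i _ => (convexOn_log_one_add_exp.comp_linearMap
      (linearPredictor (y i) (x i))).subset (Set.subset_univ _) hS).smul zero_le_two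
  exact (hlog.add hlin).sub hsoftplus

/-- The reparametrized logistic log-likelihood is concave on the region
`q > 0`. -/
theorem logistic_loglik_concave (n d : ℕ) (hn : 0 < n) (hd : 0 < d)
    (y : Fin n → ℝ) (x : Fin n → Fin (d + 1) → ℝ) :
    ConcaveOn ℝ {pq : (Fin (d + 1) → ℝ) × ℝ | 0 < pq.2}
      (fun pq => (n : ℝ) * Real.log pq.2
        + ∑ i, (y i * pq.2 - ∑ j, pq.1 j * x i j)
        - 2 * ∑ i, Real.log (1 + Real.exp (y i * pq.2 - ∑ j, pq.1 j * x i j))) :=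
  logistic_loglik_concave_general n d y x
end
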